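/- arXiv:math-ph/0611051 — 6 statements merged into one kernel-verified Lean document; each statement's English description precedes it below -/
import Mathlib

section
/- Let Π = (Π₁, Π₂, Π₃) solve Π' = Π × (I(t)⁻¹ Π) with I(t) = diag(I₁(t), I₂(t), I₃(t)), I₁, I₂ constant in time and I₃(t) differentiable with I₃'(t) > 0. Then t ↦ E_t(Π(t)) = (1/2) Π(t)·I(t)⁻¹Π(t) is non-increasing, and d/dt E_t(Π(t)) = (1/2) Π₃(t)² d/dt[I₃(t)⁻¹] ≤ 0. -/
open Matrix

/-- Antenna along the third principal axis: with `I(t) = diag(I₁, I₂, I₃(t))`,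
`I₁, I₂` constant and `I₃` increasing, the energy `E_t(Π(t)) = (1/2) Π·I(t)⁻¹Π`
along a solution of `Π' = Π × (I(t)⁻¹Π)` has derivative
`(1/2) Π₃² d/dt[I₃(t)⁻¹] = (1/2) Π₃² (−I₃'/I₃²) ≤ 0`, and is non-increasing. -/
theorem stmt7 (I₁ I₂ : ℝ) (hI₁ : 0 < I₁) (hI₂ : 0 < I₂)
    (I₃ I₃' : ℝ → ℝ) (hI₃pos : ∀ t, 0 < I₃ t)
    (hI₃ : ∀ t, HasDerivAt I₃ (I₃' t) t) (hI₃' : ∀ t, 0 < I₃' t)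
    (P : ℝ → Fin 3 → ℝ)
    (hP : ∀ t, HasDerivAt P
      (crossProduct (P t) ((Matrix.diagonal ![I₁, I₂, I₃ t])⁻¹ *ᵥ P t)) t) :
    (∀ t, HasDerivAt (fun s => (1 / 2 : ℝ) * (P s ⬝ᵥ (Matrix.diagonal ![I₁, I₂, I₃ s])⁻¹ *ᵥ P s))
        ((1 / 2 : ℝ) * (P t 2) ^ 2 * (-(I₃' t) / (I₃ t) ^ 2)) t) ∧
    (∀ t, (1 / 2 : ℝ) * (P t 2) ^ 2 * (-(I₃' t) / (I₃ t) ^ 2) ≤ 0) ∧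
    Antitone (fun s => (1 / 2 : ℝ) * (P s ⬝ᵥ (Matrix.diagonal ![I₁, I₂, I₃ s])⁻¹ *ᵥ P s)) := by
  have hinv : ∀ s, (Matrix.diagonal ![I₁, I₂, I₃ s])⁻¹
      = Matrix.diagonal ![I₁⁻¹, I₂⁻¹, (I₃ s)⁻¹] := by
    intro s
    apply Matrix.inv_eq_right_inv
    rw [Matrix.diagonal_mul_diagonal, ← Matrix.diagonal_one]
    apply congrArg Matrix.diagonal
    funext i
    fin_cases i <;> simp [hI₁.ne', hI₂.ne', (hI₃pos s).ne']
  -- energy as explicit function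
  have hE : ∀ s, (1 / 2 : ℝ) * (P s ⬝ᵥ (Matrix.diagonal ![I₁, I₂, I₃ s])⁻¹ *ᵥ P s)
      = (1 / 2 : ℝ) * ((P s 0) ^ 2 * I₁⁻¹ + (P s 1) ^ 2 * I₂⁻¹ + (P s 2) ^ 2 * (I₃ s)⁻¹) := by
    intro s
    rw [hinv s]
    simp [dotProduct, Matrix.mulVec_diagonal, Fin.sum_univ_three]
    ring
  -- component derivatives
  have hPi : ∀ (t : ℝ) (i : Fin 3), HasDerivAt (fun s => P s i)
      ((crossProduct (P t) ((Matrix.diagonal ![I₁, I₂, I₃ t])⁻¹ *ᵥ P t)) i) t := by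
    intro t i
    exact (ContinuousLinearMap.proj (R := ℝ) (φ := fun _ : Fin 3 => ℝ) i).hasFDerivAt.comp_hasDerivAt t (hP t)
  -- cross product components
  have hcross : ∀ t : ℝ, (crossProduct (P t) ((Matrix.diagonal ![I₁, I₂, I₃ t])⁻¹ *ᵥ P t))
      = ![P t 1 * (P t 2 * (I₃ t)⁻¹) - P t 2 * (P t 1 * I₂⁻¹),
          P t 2 * (P t 0 * I₁⁻¹) - P t 0 * (P t 2 * (I₃ t)⁻¹),
          P t 0 * (P t 1 * I₂⁻¹) - P t 1 * (P t 0 * I₁⁻¹)] := by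
    intro t
    rw [hinv t]
    funext i
    fin_cases i <;> simp [cross_apply, Matrix.mulVec_diagonal] <;> ring
  have key : ∀ t, HasDerivAt
      (fun s => (1 / 2 : ℝ) * (P s ⬝ᵥ (Matrix.diagonal ![I₁, I₂, I₃ s])⁻¹ *ᵥ P s))
      ((1 / 2 : ℝ) * (P t 2) ^ 2 * (-(I₃' t) / (I₃ t) ^ 2)) t := by
    intro t
    have h0 := hPi t 0
    have h1 := hPi t 1
    have h2 := hPi t 2
    rw [hcross t] at h0 h1 h2
    simp only [Matrix.cons_val_zero, Matrix.cons_val_one, Matrix.head_cons,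
      Matrix.cons_val_two, Matrix.tail_cons] at h0 h1 h2
    have hinvI₃ : HasDerivAt (fun s => (I₃ s)⁻¹) (-(I₃' t) / (I₃ t) ^ 2) t :=
      (hI₃ t).inv (hI₃pos t).ne'
    have hD : HasDerivAt
        (fun s => (1 / 2 : ℝ) * ((P s 0) ^ 2 * I₁⁻¹ + (P s 1) ^ 2 * I₂⁻¹ + (P s 2) ^ 2 * (I₃ s)⁻¹))
        ((1 / 2 : ℝ) * (((2 * P t 0 ^ 1 * (P t 1 * (P t 2 * (I₃ t)⁻¹) - P t 2 * (P t 1 * I₂⁻¹))) * I₁⁻¹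
          + (2 * P t 1 ^ 1 * (P t 2 * (P t 0 * I₁⁻¹) - P t 0 * (P t 2 * (I₃ t)⁻¹))) * I₂⁻¹)
          + ((2 * P t 2 ^ 1 * (P t 0 * (P t 1 * I₂⁻¹) - P t 1 * (P t 0 * I₁⁻¹))) * (I₃ t)⁻¹
            + (P t 2) ^ 2 * (-(I₃' t) / (I₃ t) ^ 2)))) t := by
      exact ((((h0.pow 2).mul_const I₁⁻¹).add ((h1.pow 2).mul_const I₂⁻¹)).add
        ((h2.pow 2).mul hinvI₃)).const_mul (1 / 2 : ℝ)
    have heq : ∀ s, (1 / 2 : ℝ) * (P s ⬝ᵥ (Matrix.diagonal ![I₁, I₂, I₃ s])⁻¹ *ᵥ P s)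
        = (1 / 2 : ℝ) * ((P s 0) ^ 2 * I₁⁻¹ + (P s 1) ^ 2 * I₂⁻¹ + (P s 2) ^ 2 * (I₃ s)⁻¹) := hE
    rw [show ((1 / 2 : ℝ) * (P t 2) ^ 2 * (-(I₃' t) / (I₃ t) ^ 2))
        = ((1 / 2 : ℝ) * (((2 * P t 0 ^ 1 * (P t 1 * (P t 2 * (I₃ t)⁻¹) - P t 2 * (P t 1 * I₂⁻¹))) * I₁⁻¹
          + (2 * P t 1 ^ 1 * (P t 2 * (P t 0 * I₁⁻¹) - P t 0 * (P t 2 * (I₃ t)⁻¹))) * I₂⁻¹)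
          + ((2 * P t 2 ^ 1 * (P t 0 * (P t 1 * I₂⁻¹) - P t 1 * (P t 0 * I₁⁻¹))) * (I₃ t)⁻¹
            + (P t 2) ^ 2 * (-(I₃' t) / (I₃ t) ^ 2)))) by ring]
    exact hD.congr_of_eventuallyEq (Filter.Eventually.of_forall fun s => heq s)
  have hnonpos : ∀ t, (1 / 2 : ℝ) * (P t 2) ^ 2 * (-(I₃' t) / (I₃ t) ^ 2) ≤ 0 := by
    intro t
    have h1 : (0:ℝ) ≤ (1 / 2 : ℝ) * (P t 2) ^ 2 := by positivity
    have h2 : -(I₃' t) / (I₃ t) ^ 2 ≤ 0 :=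
      div_nonpos_of_nonpos_of_nonneg (neg_nonpos.mpr (hI₃' t).le) (sq_nonneg _)
    exact mul_nonpos_of_nonneg_of_nonpos h1 h2
  refine ⟨key, hnonpos, ?_⟩
  apply antitone_of_deriv_nonpos
  · exact fun t => (key t).differentiableAt
  · intro t
    rw [(key t).deriv]
    exact hnonpos t
end

section
/- Write Π on the sphere of radius l in spherical coordinates Π₁ = l cos θ, Π₂ = l sin θ cos φ, Π₃ = l sin θ sin φ with θ ∈ (0, π/2). If Π solves Π' = Π × (I(t)⁻¹Π) with I(t) = diag(I₁(t), I₂(t), I₃(t)) and I₁(t) < I₂(t) < I₃(t) for all t, then φ satisfies φ'(t) = l cos θ(t) · [I₂(t)⁻¹ − I₁(t)⁻¹ + (I₃(t)⁻¹ − I₂(t)⁻¹) sin² φ(t)], and in particular φ is strictly monotone decreasing on intervals where θ(t) ∈ (0, π/2). -/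
open Matrix Real

/-- In spherical coordinates `Π = (l cos θ, l sin θ cos φ, l sin θ sin φ)` with
`θ ∈ (0, π/2)`, a solution of `Π' = Π × (I(t)⁻¹Π)` with
`I(t) = diag(I₁(t), I₂(t), I₃(t))`, `0 < I₁(t) < I₂(t) < I₃(t)`, satisfies
`φ' = l cos θ [I₂⁻¹ − I₁⁻¹ + (I₃⁻¹ − I₂⁻¹) sin²φ]`; in particular `φ` is
strictly monotone decreasing. -/
theorem stmt8 (l : ℝ) (hl : 0 < l)
    (I₁ I₂ I₃ : ℝ → ℝ) (hIpos : ∀ t, 0 < I₁ t)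
    (hord : ∀ t, I₁ t < I₂ t ∧ I₂ t < I₃ t)
    (θ φ θ' φ' : ℝ → ℝ)
    (hθ : ∀ t, HasDerivAt θ (θ' t) t) (hφ : ∀ t, HasDerivAt φ (φ' t) t)
    (hrange : ∀ t, θ t ∈ Set.Ioo (0 : ℝ) (π / 2))
    (P : ℝ → Fin 3 → ℝ)
    (hcoord : ∀ t, P t = ![l * cos (θ t), l * sin (θ t) * cos (φ t), l * sin (θ t) * sin (φ t)])
    (hP : ∀ t, HasDerivAt P
      (crossProduct (P t) ((Matrix.diagonal ![I₁ t, I₂ t, I₃ t])⁻¹ *ᵥ P t)) t) :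
    (∀ t, φ' t = l * cos (θ t) *
        ((I₂ t)⁻¹ - (I₁ t)⁻¹ + ((I₃ t)⁻¹ - (I₂ t)⁻¹) * sin (φ t) ^ 2)) ∧
    StrictAnti φ := by
  have key : ∀ t, φ' t = l * cos (θ t) *
      ((I₂ t)⁻¹ - (I₁ t)⁻¹ + ((I₃ t)⁻¹ - (I₂ t)⁻¹) * sin (φ t) ^ 2) := by
    intro t
    -- the RHS vector, computed
    have h0 := hIpos t
    have ⟨h12, h23⟩ := hord t
    have hI2 : 0 < I₂ t := lt_trans h0 h12
    have hI3 : 0 < I₃ t := lt_trans hI2 h23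
    have hdi : (Matrix.diagonal ![I₁ t, I₂ t, I₃ t])⁻¹
        = Matrix.diagonal ![(I₁ t)⁻¹, (I₂ t)⁻¹, (I₃ t)⁻¹] := by
      apply Matrix.inv_eq_right_inv
      ext i j
      rw [Matrix.diagonal_mul_diagonal]
      fin_cases i <;> fin_cases j <;>
        simp [Matrix.diagonal_apply, Matrix.one_apply,
          mul_inv_cancel₀ h0.ne', mul_inv_cancel₀ hI2.ne', mul_inv_cancel₀ hI3.ne']
    have hw : (Matrix.diagonal ![I₁ t, I₂ t, I₃ t])⁻¹ *ᵥ P t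
        = ![(I₁ t)⁻¹ * P t 0, (I₂ t)⁻¹ * P t 1, (I₃ t)⁻¹ * P t 2] := by
      rw [hdi]
      funext i
      rw [Matrix.mulVec_diagonal]
      fin_cases i <;> simp
    have hcross : crossProduct (P t) ((Matrix.diagonal ![I₁ t, I₂ t, I₃ t])⁻¹ *ᵥ P t)
        = ![P t 1 * ((I₃ t)⁻¹ * P t 2) - P t 2 * ((I₂ t)⁻¹ * P t 1),
            P t 2 * ((I₁ t)⁻¹ * P t 0) - P t 0 * ((I₃ t)⁻¹ * P t 2),
            P t 0 * ((I₂ t)⁻¹ * P t 1) - P t 1 * ((I₁ t)⁻¹ * P t 0)] := by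
      rw [hw, cross_apply]
      simp
    have hPc := (hasDerivAt_pi.1 (hP t))
    have h1ode := hPc 1
    have h2ode := hPc 2
    rw [hcross] at h1ode h2ode
    simp only [Matrix.cons_val_one, Matrix.head_cons, Matrix.cons_val_two, Matrix.tail_cons, Matrix.cons_val_zero] at h1ode h2ode
    -- derivatives from the coordinate formulas
    have hfun1 : (fun s => P s 1) = fun s => l * sin (θ s) * cos (φ s) := by
      funext s; rw [hcoord s]; simp
    have hfun2 : (fun s => P s 2) = fun s => l * sin (θ s) * sin (φ s) := by
      funext s; rw [hcoord s]; simp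
    have h1c : HasDerivAt (fun s => P s 1)
        (l * (cos (θ t) * θ' t) * cos (φ t) + l * sin (θ t) * (-sin (φ t) * φ' t)) t := by
      rw [hfun1]; exact (((hθ t).sin.const_mul l).mul (hφ t).cos)
    have h2c : HasDerivAt (fun s => P s 2)
        (l * (cos (θ t) * θ' t) * sin (φ t) + l * sin (θ t) * (cos (φ t) * φ' t)) t := by
      rw [hfun2]; exact (((hθ t).sin.const_mul l).mul (hφ t).sin)
    have E1 := h1c.unique h1ode
    have E2 := h2c.unique h2ode
    have hPv := hcoord t
    have hP0 : P t 0 = l * cos (θ t) := by rw [hPv]; simp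
    have hP1 : P t 1 = l * sin (θ t) * cos (φ t) := by rw [hPv]; simp
    have hP2 : P t 2 = l * sin (θ t) * sin (φ t) := by rw [hPv]; simp
    simp only [hP0, hP1, hP2] at E1 E2
    have hs : 0 < sin (θ t) := sin_pos_of_pos_of_lt_pi (hrange t).1
      (lt_trans (hrange t).2 (by linarith [pi_pos]))
    have hls : l * sin (θ t) ≠ 0 := by positivity
    have hpyth := sin_sq_add_cos_sq (φ t)
    apply mul_left_cancel₀ hls
    linear_combination cos (φ t) * E2 - sin (φ t) * E1 +
      (l ^ 2 * sin (θ t) * cos (θ t) * ((I₂ t)⁻¹ - (I₁ t)⁻¹) - l * sin (θ t) * φ' t) * hpyth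
  refine ⟨key, ?_⟩
  have hderiv : ∀ t, deriv φ t < 0 := by
    intro t
    rw [(hφ t).deriv, key t]
    have h0 := hIpos t
    have ⟨h12, h23⟩ := hord t
    have hI2 : 0 < I₂ t := lt_trans h0 h12
    have hI3 : 0 < I₃ t := lt_trans hI2 h23
    have hinv1 : (I₂ t)⁻¹ < (I₁ t)⁻¹ := inv_strictAnti₀ h0 h12
    have hinv2 : (I₃ t)⁻¹ < (I₂ t)⁻¹ := inv_strictAnti₀ hI2 h23
    have hcos : 0 < cos (θ t) := cos_pos_of_mem_Ioo
      ⟨by linarith [pi_pos, (hrange t).1], (hrange t).2⟩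
    have hsq : 0 ≤ sin (φ t) ^ 2 := sq_nonneg _
    have hbr : (I₂ t)⁻¹ - (I₁ t)⁻¹ + ((I₃ t)⁻¹ - (I₂ t)⁻¹) * sin (φ t) ^ 2 < 0 := by
      have : ((I₃ t)⁻¹ - (I₂ t)⁻¹) * sin (φ t) ^ 2 ≤ 0 :=
        mul_nonpos_of_nonpos_of_nonneg (by linarith) hsq
      linarith
    exact mul_neg_of_pos_of_neg (mul_pos hl hcos) hbr
  exact strictAnti_of_deriv_neg hderiv
end

section
/- Let d₀ : ℝ → (ℝ³)^N be a differentiable curve with invertible inertia tensor I(d₀(t)) for all t, let L_CM ∈ ℝ³ be fixed, and let R : ℝ → SO(3) be differentiable with body angular velocity ω_B(t) (defined by ω̂_B = R⁻¹R'). Define Π(t) = I(d₀(t)) ω_B(t) + L(ḋ₀(t)). Then R(t)Π(t) = L_CM for all t (conservation of spatial angular momentum) holds if and only if R(t₁)Π(t₁) = L_CM at some t₁ and Π satisfies Π'(t) = Π(t) × (I(d₀(t))⁻¹ (Π(t) − L(ḋ₀(t)))) for all t. -/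
open Matrix

/-- Total angular momentum `L({rᵢ, ṙᵢ}) = Σᵢ mᵢ rᵢ × ṙᵢ` of an `N`-particle system. -/
noncomputable def angMom {N : ℕ} (m : Fin N → ℝ) (r v : Fin N → Fin 3 → ℝ) : Fin 3 → ℝ :=
  ∑ i, m i • crossProduct (r i) (v i)

/-- The (locked) inertia tensor as a matrix, with
`v · I({rᵢ}) w = Σᵢ mᵢ (v × rᵢ)·(w × rᵢ)`. -/
noncomputable def inertiaMatrix {N : ℕ} (m : Fin N → ℝ) (r : Fin N → Fin 3 → ℝ) :
    Matrix (Fin 3) (Fin 3) ℝ :=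
  Matrix.of fun i j => ∑ k, m k *
    (crossProduct (Pi.single i 1) (r k) ⬝ᵥ crossProduct (Pi.single j 1) (r k))

/-- Conservation of the spatial angular momentum `R(t)Π(t) = L_CM` for all `t`
is equivalent to conservation at one time `t₁` together with the non-autonomous
body angular momentum equation
`Π' = Π × (I(d₀(t))⁻¹ (Π − L(ḋ₀(t))))`, where `Π = I(d₀(t)) ω_B + L(ḋ₀(t))`. -/
theorem stmt12 {N : ℕ} (m : Fin N → ℝ) (hm : ∀ i, 0 < m i)
    (d₀ d₀' : ℝ → Fin N → Fin 3 → ℝ)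
    (hd₀ : ∀ t i, HasDerivAt (fun s => d₀ s i) (d₀' t i) t)
    (hinv : ∀ t, IsUnit (inertiaMatrix m (d₀ t)))
    (L_CM : Fin 3 → ℝ) (t₁ : ℝ)
    (R R' : ℝ → Matrix (Fin 3) (Fin 3) ℝ)
    (hSO : ∀ t, (R t)ᵀ * R t = 1 ∧ (R t).det = 1)
    (hR' : ∀ t i j, HasDerivAt (fun s => R s i j) (R' t i j) t)
    (ω : ℝ → Fin 3 → ℝ)
    (hω : ∀ t (v : Fin 3 → ℝ), crossProduct (ω t) v = ((R t)ᵀ * R' t) *ᵥ v)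
    (P P' : ℝ → Fin 3 → ℝ)
    (hPdef : ∀ t, P t = inertiaMatrix m (d₀ t) *ᵥ ω t + angMom m (d₀ t) (d₀' t))
    (hP : ∀ t, HasDerivAt P (P' t) t) :
    (∀ t, R t *ᵥ P t = L_CM) ↔
      (R t₁ *ᵥ P t₁ = L_CM ∧
        ∀ t, P' t = crossProduct (P t)
          ((inertiaMatrix m (d₀ t))⁻¹ *ᵥ (P t - angMom m (d₀ t) (d₀' t)))) := by
  -- ω t = I⁻¹ (P t − L)
  have hωeq : ∀ t, (inertiaMatrix m (d₀ t))⁻¹ *ᵥ (P t - angMom m (d₀ t) (d₀' t)) = ω t := by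
    intro t
    have h1 : P t - angMom m (d₀ t) (d₀' t) = inertiaMatrix m (d₀ t) *ᵥ ω t := by
      rw [hPdef t]; abel
    rw [h1, Matrix.mulVec_mulVec,
      Matrix.nonsing_inv_mul _ ((Matrix.isUnit_iff_isUnit_det _).1 (hinv t)), Matrix.one_mulVec]
  -- derivative of R *ᵥ P
  have hRP : ∀ t, HasDerivAt (fun s => R s *ᵥ P s) (R' t *ᵥ P t + R t *ᵥ P' t) t := by
    intro t
    rw [hasDerivAt_pi]
    intro i
    have hPj : ∀ j, HasDerivAt (fun s => P s j) (P' t j) t :=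
      fun j => hasDerivAt_pi.1 (hP t) j
    have : HasDerivAt (fun s => ∑ j, R s i j * P s j)
        (∑ j, (R' t i j * P t j + R t i j * P' t j)) t :=
      HasDerivAt.fun_sum fun j _ => (hR' t i j).mul (hPj j)
    simpa [Matrix.mulVec, dotProduct, Finset.sum_add_distrib] using this
  have hRR : ∀ t, R t * (R t)ᵀ = 1 := fun t => mul_eq_one_comm.1 (hSO t).1
  constructor
  · intro h
    refine ⟨h t₁, fun t => ?_⟩
    have hconst : (fun s => R s *ᵥ P s) = fun _ => L_CM := funext h
    have h0 : HasDerivAt (fun s => R s *ᵥ P s) 0 t := by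
      rw [hconst]; exact hasDerivAt_const _ _
    have heq : R' t *ᵥ P t + R t *ᵥ P' t = 0 := (hRP t).unique h0
    have hRP' : R t *ᵥ P' t = -(R' t *ᵥ P t) := by
      rw [eq_neg_iff_add_eq_zero, add_comm]; exact heq
    have : P' t = (R t)ᵀ *ᵥ (R t *ᵥ P' t) := by
      rw [Matrix.mulVec_mulVec, (hSO t).1, Matrix.one_mulVec]
    rw [this, hRP', Matrix.mulVec_neg, Matrix.mulVec_mulVec, ← hω t (P t),
      hωeq t, ← cross_anticomm, neg_neg]
  · rintro ⟨h₁, hode⟩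
    have h0 : ∀ t, HasDerivAt (fun s => R s *ᵥ P s) 0 t := by
      intro t
      have : R' t *ᵥ P t + R t *ᵥ P' t = 0 := by
        rw [hode t, hωeq t, (cross_anticomm (ω t) (P t)).symm, hω t (P t),
          Matrix.mulVec_neg, Matrix.mulVec_mulVec, ← Matrix.mul_assoc, hRR t, Matrix.one_mul]
        abel
      rw [← this]; exact hRP t
    intro t
    have := is_const_of_deriv_eq_zero (fun s => (h0 s).differentiableAt)
      (fun s => (h0 s).deriv) t t₁
    rw [this, h₁]
end

section
/- Let I(t) be a time-dependent symmetric positive definite matrix, b(t) ∈ ℝ³, Π a solution of Π' = Π × (I(t)⁻¹(Π − b(t))) with ‖Π(t)‖ = ‖L‖ = l > 0, and let R : ℝ → SO(3) satisfy the reconstruction equation R' = R ω̂_B with ω_B = I(t)⁻¹(Π − b(t)) and R(t)Π(t) = L for all t. Write R(t) = exp(θ(t) L̂/l) R₀(t), where R₀(t) also satisfies R₀(t)Π(t) = L and the horizontality condition (R₀⁻¹R₀')ˇ · Π(t) = 0 (vanishing of the connection form), with θ(t₁) = 0. Then θ satisfies l θ'(t) = I(t)⁻¹Π(t) · Π(t)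 − I(t)⁻¹b(t) · Π(t). -/
open Matrix

/-- The standard Lie algebra isomorphism `ˆ : ℝ³ → so(3)`, `ω̂ v = ω × v`. -/
def hatMap (w : Fin 3 → ℝ) : Matrix (Fin 3) (Fin 3) ℝ :=
  !![0, -w 2, w 1; w 2, 0, -w 0; -w 1, w 0, 0]

attribute [local instance] Matrix.linftyOpNormedRing Matrix.linftyOpNormedAlgebra

lemma hatMap_mulVec (w v : Fin 3 → ℝ) : hatMap w *ᵥ v = crossProduct w v := by
  ext i
  fin_cases i <;>
    simp [hatMap, crossProduct, mulVec, dotProduct, Fin.sum_univ_three] <;> ring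

lemma crossProduct_mulVec (A : Matrix (Fin 3) (Fin 3) ℝ) (u v : Fin 3 → ℝ) :
    crossProduct (A *ᵥ u) (A *ᵥ v) = (A.adjugate)ᵀ *ᵥ crossProduct u v := by
  ext i
  fin_cases i <;>
    simp [crossProduct, mulVec, dotProduct, Fin.sum_univ_three,
      Matrix.adjugate_fin_three, Matrix.transpose_apply] <;> ring

lemma adjugate_transpose_of_so (A : Matrix (Fin 3) (Fin 3) ℝ)
    (h1 : Aᵀ * A = 1) (h2 : A.det = 1) : (A.adjugate)ᵀ = A := by
  have h3 : A * A.adjugate = 1 := by rw [Matrix.mul_adjugate, h2, one_smul]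
  have h4 : A.adjugate = Aᵀ := by
    calc A.adjugate = 1 * A.adjugate := (one_mul _).symm
    _ = (Aᵀ * A) * A.adjugate := by rw [h1]
    _ = Aᵀ * (A * A.adjugate) := by rw [Matrix.mul_assoc]
    _ = Aᵀ := by rw [h3, mul_one]
  rw [h4, transpose_transpose]

lemma entry_hasDerivAt {f : ℝ → Matrix (Fin 3) (Fin 3) ℝ} {D : Matrix (Fin 3) (Fin 3) ℝ}
    {t : ℝ} (h : HasDerivAt f D t) (i j : Fin 3) :
    HasDerivAt (fun s => f s i j) (D i j) t := by
  let e : Matrix (Fin 3) (Fin 3) ℝ →ₗ[ℝ] ℝ :=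
    { toFun := fun A => A i j
      map_add' := fun _ _ => rfl
      map_smul' := fun _ _ => rfl }
  have := (e.toContinuousLinearMap.hasFDerivAt (x := f t)).comp_hasDerivAt t h
  exact this

lemma cross_cancel (a c : Fin 3 → ℝ)
    (h : ∀ v, crossProduct a v = crossProduct c v) : a = c := by
  ext i
  fin_cases i
  · have := congrFun (h ![0,1,0]) 2
    simpa [crossProduct] using this
  · have := congrFun (h ![1,0,0]) 2
    simpa [crossProduct] using this
  · have := congrFun (h ![1,0,0]) 1
    simpa [crossProduct] using this


/-- The phase equation `l θ' = I(t)⁻¹Π · Π − I(t)⁻¹ b · Π` for the angle `θ` in the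
decomposition `R(t) = exp(θ(t) L̂/l) R₀(t)` of a solution of the reconstruction
equation `R' = R ω̂_B`, `ω_B = I(t)⁻¹(Π − b)`, along a horizontal lift `R₀`. -/
theorem stmt13 (t₁ : ℝ) (l : ℝ) (hl : 0 < l) (L : Fin 3 → ℝ) (hL : L ⬝ᵥ L = l ^ 2)
    (I : ℝ → Matrix (Fin 3) (Fin 3) ℝ)
    (hIsymm : ∀ t, (I t).IsSymm) (hIpos : ∀ t, (I t).PosDef)
    (b : ℝ → Fin 3 → ℝ)
    (P : ℝ → Fin 3 → ℝ) (hPnorm : ∀ t, P t ⬝ᵥ P t = l ^ 2)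
    (hP : ∀ t, HasDerivAt P (crossProduct (P t) ((I t)⁻¹ *ᵥ (P t - b t))) t)
    -- the reconstructed rotation R with R' = R ω̂_B and R Π = L
    (R R' : ℝ → Matrix (Fin 3) (Fin 3) ℝ)
    (hSO : ∀ t, (R t)ᵀ * R t = 1 ∧ (R t).det = 1)
    (hR' : ∀ t i j, HasDerivAt (fun s => R s i j) (R' t i j) t)
    (hrec : ∀ t (v : Fin 3 → ℝ),
      ((R t)ᵀ * R' t) *ᵥ v = crossProduct ((I t)⁻¹ *ᵥ (P t - b t)) v)
    (hRP : ∀ t, R t *ᵥ P t = L)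
    -- the horizontal lift R₀ with R₀ Π = L and connection form vanishing
    (R₀ R₀' : ℝ → Matrix (Fin 3) (Fin 3) ℝ)
    (hSO₀ : ∀ t, (R₀ t)ᵀ * R₀ t = 1 ∧ (R₀ t).det = 1)
    (hR₀' : ∀ t i j, HasDerivAt (fun s => R₀ s i j) (R₀' t i j) t)
    (hR₀P : ∀ t, R₀ t *ᵥ P t = L)
    (ξ : ℝ → Fin 3 → ℝ)
    (hξ : ∀ t (v : Fin 3 → ℝ), ((R₀ t)ᵀ * R₀' t) *ᵥ v = crossProduct (ξ t) v)
    (hhoriz : ∀ t, ξ t ⬝ᵥ P t = 0)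
    -- the phase θ with R = exp(θ L̂/l) R₀ and θ(t₁) = 0
    (θ θ' : ℝ → ℝ) (hθ : ∀ t, HasDerivAt θ (θ' t) t) (hθ₁ : θ t₁ = 0)
    (hdecomp : ∀ t, R t = NormedSpace.exp ((θ t / l) • hatMap L) * R₀ t) :
    ∀ t, l * θ' t = ((I t)⁻¹ *ᵥ P t) ⬝ᵥ P t - ((I t)⁻¹ *ᵥ b t) ⬝ᵥ P t := by
  intro t
  set A := hatMap L with hA
  set E : ℝ → Matrix (Fin 3) (Fin 3) ℝ := fun s => NormedSpace.exp ((θ s / l) • A) with hE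
  -- derivative of E
  have hc : HasDerivAt (fun s => θ s / l) (θ' t / l) t := (hθ t).div_const l
  have hEd : HasDerivAt E ((θ' t / l) • (E t * A)) t := by
    have h1 := hasDerivAt_exp_smul_const (𝕂 := ℝ) (𝔸 := Matrix (Fin 3) (Fin 3) ℝ) A (θ t / l)
    have := h1.scomp t hc
    exact this
  -- entrywise derivative of R from the decomposition
  have hRalt : ∀ i j, HasDerivAt (fun s => R s i j)
      (((θ' t / l) • (E t * A) * R₀ t + E t * R₀' t) i j) t := by
    intro i j
    have hsum : HasDerivAt (fun s => ∑ k, E s i k * R₀ s k j)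
        (∑ k : Fin 3, (((θ' t / l) • (E t * A)) i k * R₀ t k j + E t i k * R₀' t k j)) t := by
      refine HasDerivAt.fun_sum fun k _ => ?_
      exact (entry_hasDerivAt hEd i k).mul (hR₀' t k j)
    have hfun : (fun s => R s i j) = fun s => ∑ k, E s i k * R₀ s k j := by
      funext s
      rw [hdecomp s]
      simp [Matrix.mul_apply, hE]
    rw [hfun]
    convert hsum using 1
    simp only [Matrix.add_apply, Matrix.mul_apply, Matrix.smul_apply, smul_eq_mul,
      Finset.sum_add_distrib]
  -- identify R'
  have hR'eq : R' t = (θ' t / l) • (E t * A) * R₀ t + E t * R₀' t := by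
    ext i j
    exact (hR' t i j).unique (hRalt i j)
  -- E t = R t * (R₀ t)ᵀ
  have hR₀R₀T : R₀ t * (R₀ t)ᵀ = 1 := mul_eq_one_comm.mp (hSO₀ t).1
  have hEt : E t = R t * (R₀ t)ᵀ := by
    rw [hdecomp t, Matrix.mul_assoc, hR₀R₀T, mul_one]
  -- compute RᵀR'
  have hkey : (R t)ᵀ * R' t = (θ' t / l) • ((R₀ t)ᵀ * A * R₀ t) + (R₀ t)ᵀ * R₀' t := by
    have hRTE : (R t)ᵀ * E t = (R₀ t)ᵀ := by
      rw [hEt, ← Matrix.mul_assoc, (hSO t).1, one_mul]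
    rw [hR'eq, Matrix.mul_add]
    congr 1
    · rw [smul_mul_assoc, Matrix.mul_smul]
      congr 1
      rw [← Matrix.mul_assoc, ← Matrix.mul_assoc, hRTE]
    · rw [← Matrix.mul_assoc, hRTE]
  -- mulVec identity
  have hmid : ∀ v, ((R₀ t)ᵀ * A * R₀ t) *ᵥ v = crossProduct (P t) v := by
    intro v
    have hadj : ((R₀ t).adjugate)ᵀ = R₀ t := adjugate_transpose_of_so _ (hSO₀ t).1 (hSO₀ t).2
    calc ((R₀ t)ᵀ * A * R₀ t) *ᵥ v = (R₀ t)ᵀ *ᵥ (A *ᵥ (R₀ t *ᵥ v)) := by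
          rw [← Matrix.mulVec_mulVec, ← Matrix.mulVec_mulVec]
    _ = (R₀ t)ᵀ *ᵥ crossProduct L (R₀ t *ᵥ v) := by rw [hA, hatMap_mulVec]
    _ = (R₀ t)ᵀ *ᵥ crossProduct (R₀ t *ᵥ P t) (R₀ t *ᵥ v) := by rw [hR₀P t]
    _ = (R₀ t)ᵀ *ᵥ (((R₀ t).adjugate)ᵀ *ᵥ crossProduct (P t) v) := by
          rw [crossProduct_mulVec]
    _ = ((R₀ t)ᵀ * R₀ t) *ᵥ crossProduct (P t) v := by rw [hadj, Matrix.mulVec_mulVec]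
    _ = crossProduct (P t) v := by rw [(hSO₀ t).1, Matrix.one_mulVec]
  -- vector identity: ω = (θ'/l) • P + ξ
  have hω : (I t)⁻¹ *ᵥ (P t - b t) = (θ' t / l) • P t + ξ t := by
    apply cross_cancel
    intro v
    have h1 := hrec t v
    rw [hkey] at h1
    rw [Matrix.add_mulVec, Matrix.smul_mulVec, hmid v, hξ t v] at h1
    rw [← h1]
    simp [_root_.map_add, _root_.map_smul, LinearMap.add_apply, LinearMap.smul_apply]
  -- dot with P
  have hdot := congrArg (fun w => w ⬝ᵥ P t) hω
  simp only [add_dotProduct, smul_dotProduct, smul_eq_mul,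
    hPnorm t, hhoriz t, add_zero, Matrix.mulVec_sub, sub_dotProduct] at hdot
  rw [hdot]
  field_simp
end

section
/- Let I₀ = diag(I₁, I₂, I₃) with I₂ = I₃ > 0 and I₁ > 0, let I₁(t) > 0 be continuous with I₁(0) the initial value, and let Π_RB solve the Euler equation Π_RB' = Π_RB × (diag(I₁(0),I₂,I₂)⁻¹ Π_RB) with initial value Π₀, where I₁(0)⁻¹ ≠ I₂⁻¹. Define τ(t) = ∫₀^t (I₁(s)⁻¹ − I₂⁻¹)/(I₁(0)⁻¹ − I₂⁻¹) ds. Then Π(t) := Π_RB(τ(t)) solves Π' = Π × (diag(I₁(t), I₂, I₂)⁻¹ Π) with Π(0) = Π₀. -/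
open Matrix

/-- Axially symmetric body expanding along its symmetry axis: if `Π_RB` solves the
Euler equation for `diag(I₁(0), I₂, I₂)` with `Π_RB(0) = Π₀` and
`τ(t) = ∫₀ᵗ (I₁(s)⁻¹ − I₂⁻¹)/(I₁(0)⁻¹ − I₂⁻¹) ds`, then `Π(t) := Π_RB(τ(t))`
solves `Π' = Π × (diag(I₁(t), I₂, I₂)⁻¹ Π)` with `Π(0) = Π₀`. -/
theorem stmt14 (I₂ : ℝ) (hI₂ : 0 < I₂)
    (I₁ : ℝ → ℝ) (hI₁pos : ∀ t, 0 < I₁ t) (hI₁cont : Continuous I₁)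
    (hne : (I₁ 0)⁻¹ ≠ I₂⁻¹)
    (PRB : ℝ → Fin 3 → ℝ) (P₀ : Fin 3 → ℝ)
    (hRB : ∀ s, HasDerivAt PRB
      (crossProduct (PRB s) ((Matrix.diagonal ![I₁ 0, I₂, I₂])⁻¹ *ᵥ PRB s)) s)
    (hinit : PRB 0 = P₀)
    (τ : ℝ → ℝ)
    (hτ : ∀ t, τ t = ∫ s in (0 : ℝ)..t, ((I₁ s)⁻¹ - I₂⁻¹) / ((I₁ 0)⁻¹ - I₂⁻¹)) :
    (∀ t, HasDerivAt (fun u => PRB (τ u))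
        (crossProduct (PRB (τ t)) ((Matrix.diagonal ![I₁ t, I₂, I₂])⁻¹ *ᵥ PRB (τ t))) t) ∧
    PRB (τ 0) = P₀ := by
  have hg : Continuous fun s => ((I₁ s)⁻¹ - I₂⁻¹) / ((I₁ 0)⁻¹ - I₂⁻¹) := by
    exact ((hI₁cont.inv₀ fun s => (hI₁pos s).ne').sub continuous_const).div_const _
  have hτ0 : τ 0 = 0 := by simp [hτ 0]
  constructor
  · intro t
    have hτd : HasDerivAt τ (((I₁ t)⁻¹ - I₂⁻¹) / ((I₁ 0)⁻¹ - I₂⁻¹)) t := by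
      have : HasDerivAt (fun u => ∫ s in (0:ℝ)..u,
          ((I₁ s)⁻¹ - I₂⁻¹) / ((I₁ 0)⁻¹ - I₂⁻¹))
          (((I₁ t)⁻¹ - I₂⁻¹) / ((I₁ 0)⁻¹ - I₂⁻¹)) t :=
        intervalIntegral.integral_hasDerivAt_right (hg.intervalIntegrable 0 t)
          hg.aestronglyMeasurable.stronglyMeasurableAtFilter hg.continuousAt
      exact this.congr_deriv rfl |>.congr_of_eventuallyEq
        (Filter.Eventually.of_forall fun u => (hτ u))
    have hc := (hRB (τ t)).scomp t hτd
    convert hc using 1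
    case e'_4 => rfl
    case e'_5 => rfl
    case e'_6 => rfl
    case e'_8 => rfl
    -- show target vector equals smul
    set x := PRB (τ t) with hx
    have ha0 : (I₁ 0) ≠ 0 := (hI₁pos 0).ne'
    have hat : (I₁ t) ≠ 0 := (hI₁pos t).ne'
    have hb : I₂ ≠ 0 := hI₂.ne'
    have hdne : (I₁ 0)⁻¹ - I₂⁻¹ ≠ 0 := sub_ne_zero.mpr hne
    have hinv : ∀ u : ℝ, u ≠ 0 → (Matrix.diagonal ![u, I₂, I₂])⁻¹
        = Matrix.diagonal ![u⁻¹, I₂⁻¹, I₂⁻¹] := by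
      intro u hu
      apply Matrix.inv_eq_right_inv
      rw [Matrix.diagonal_mul_diagonal]
      ext i j
      fin_cases i <;> fin_cases j <;>
        simp [Matrix.diagonal_apply, Matrix.one_apply,
          mul_inv_cancel₀ hu, mul_inv_cancel₀ hb]
    rw [hinv _ hat, hinv _ ha0]
    set A := (I₁ 0)⁻¹
    set At := (I₁ t)⁻¹
    set B := I₂⁻¹
    funext i
    fin_cases i <;>
      simp only [cross_apply, Matrix.mulVec_diagonal, Pi.smul_apply, smul_eq_mul,
        Matrix.cons_val_zero, Matrix.cons_val_one, Matrix.head_cons,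
        Matrix.cons_val_two, Matrix.tail_cons, Fin.zero_eta, Fin.mk_one, Fin.reduceFinMk] <;>
      field_simp <;> ring
  · rw [hτ0, hinit]
end

section
/- Let Π solve Π' = Π × (I(t)⁻¹Π) on the sphere of radius l with I(t) = diag(I₁(t), I₂(t), I₃(t)) and I₁(t) < I₂(t) < I₃(t) for all t ∈ [t₁,t₂]. If E_t(Π(t)) := (1/2)Π(t)·I(t)⁻¹Π(t) > l²/(2 I₂(t)) for all t ∈ [t₁,t₂] and Π₁(t₁) > 0, then Π₁(t) > 0 for all t ∈ [t₁,t₂]. -/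
open Matrix

/-- Trapping in a half-space: if `Π` solves `Π' = Π × (I(t)⁻¹Π)` on the sphere of
radius `l` with `I(t) = diag(I₁(t), I₂(t), I₃(t))`, `0 < I₁(t) < I₂(t) < I₃(t)`, the
energy satisfies `E_t(Π(t)) > l²/(2I₂(t))` on `[t₁,t₂]`, and `Π₁(t₁) > 0`, then
`Π₁(t) > 0` throughout `[t₁,t₂]`. -/
theorem stmt16 (l : ℝ) (hl : 0 < l) (t₁ t₂ : ℝ) (hle : t₁ ≤ t₂)
    (I₁ I₂ I₃ : ℝ → ℝ)
    (hIpos : ∀ t ∈ Set.Icc t₁ t₂, 0 < I₁ t)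
    (hord : ∀ t ∈ Set.Icc t₁ t₂, I₁ t < I₂ t ∧ I₂ t < I₃ t)
    (P : ℝ → Fin 3 → ℝ)
    (hP : ∀ t, HasDerivAt P
      (crossProduct (P t) ((Matrix.diagonal ![I₁ t, I₂ t, I₃ t])⁻¹ *ᵥ P t)) t)
    (hnorm : ∀ t ∈ Set.Icc t₁ t₂, P t ⬝ᵥ P t = l ^ 2)
    (hE : ∀ t ∈ Set.Icc t₁ t₂,
      l ^ 2 / (2 * I₂ t) <
        (1 / 2 : ℝ) * (P t ⬝ᵥ (Matrix.diagonal ![I₁ t, I₂ t, I₃ t])⁻¹ *ᵥ P t))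
    (hinit : 0 < P t₁ 0) :
    ∀ t ∈ Set.Icc t₁ t₂, 0 < P t 0 := by
  -- continuity of t ↦ P t 0
  have hcont : Continuous fun t => P t 0 := by
    have : Continuous P := by
      apply continuous_iff_continuousAt.2
      intro t
      exact (hP t).continuousAt
    exact (continuous_apply 0).comp this
  -- key: P s 0 ≠ 0 for s ∈ Icc
  have hkey : ∀ s ∈ Set.Icc t₁ t₂, P s 0 ≠ 0 := by
    intro s hs h0
    have hI1 := hIpos s hs
    have hI2 : 0 < I₂ s := lt_trans hI1 (hord s hs).1
    have hI3 : 0 < I₃ s := lt_trans hI2 (hord s hs).2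
    have hEs := hE s hs
    have hns := hnorm s hs
    -- compute the inverse of the diagonal matrix
    have hinv : (Matrix.diagonal ![I₁ s, I₂ s, I₃ s])⁻¹
        = Matrix.diagonal ![(I₁ s)⁻¹, (I₂ s)⁻¹, (I₃ s)⁻¹] := by
      apply Matrix.inv_eq_right_inv
      rw [Matrix.diagonal_mul_diagonal]
      convert Matrix.diagonal_one
      rename_i i
      fin_cases i <;>
        simp [mul_inv_cancel₀ hI1.ne', mul_inv_cancel₀ hI2.ne', mul_inv_cancel₀ hI3.ne']
    rw [hinv] at hEs
    have hdot : P s ⬝ᵥ Matrix.diagonal ![(I₁ s)⁻¹, (I₂ s)⁻¹, (I₃ s)⁻¹] *ᵥ P s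
        = (P s 1)^2 / I₂ s + (P s 2)^2 / I₃ s := by
      simp [dotProduct, Matrix.mulVec_diagonal, Fin.sum_univ_three, h0]
      ring
    rw [hdot] at hEs
    have hns' : (P s 1)^2 + (P s 2)^2 = l^2 := by
      simpa [dotProduct, Fin.sum_univ_three, h0, sq] using hns
    -- energy bound
    have hb : (1/2 : ℝ) * ((P s 1)^2 / I₂ s + (P s 2)^2 / I₃ s)
        ≤ l^2 / (2 * I₂ s) := by
      have h3 : (P s 2)^2 / I₃ s ≤ (P s 2)^2 / I₂ s :=
        div_le_div_of_nonneg_left (sq_nonneg _) hI2 (le_of_lt (hord s hs).2)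
      have : (1/2 : ℝ) * ((P s 1)^2 / I₂ s + (P s 2)^2 / I₃ s)
          ≤ (1/2 : ℝ) * (((P s 1)^2 + (P s 2)^2) / I₂ s) := by
        rw [add_div]
        nlinarith
      rw [hns'] at this
      calc (1/2 : ℝ) * ((P s 1)^2 / I₂ s + (P s 2)^2 / I₃ s)
          ≤ (1/2 : ℝ) * (l^2 / I₂ s) := this
        _ = l^2 / (2 * I₂ s) := by field_simp
    linarith
  -- now the sign cannot change
  intro t ht
  by_contra hnp
  push_neg at hnp
  have hsub : Set.Icc t₁ t ⊆ Set.Icc t₁ t₂ := Set.Icc_subset_Icc le_rfl ht.2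
  have hiv := intermediate_value_Icc' ht.1 (hcont.continuousOn (s := Set.Icc t₁ t))
  have h0mem : (0 : ℝ) ∈ Set.Icc (P t 0) (P t₁ 0) := ⟨hnp, le_of_lt hinit⟩
  obtain ⟨s, hs, hs0⟩ := hiv h0mem
  exact hkey s (hsub hs) hs0
end
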